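/- Let B ⊆ ℝ³ be an open ball centered at the origin, and let a₁, a₂, a₃ be real analytic functions of one real variable, each nonvanishing on the relevant coordinate projection of B. Suppose f : B → ℝ is real analytic and satisfies the system a₁(x₁)·∂f/∂x₁ − a₂(x₂)·∂f/∂x₂ = 0 and a₂(x₂)·∂f/∂x₂ − a₃(x₃)·∂f/∂x₃ = 0 at every point of B. Then there exist an open set W̃ ⊆ B and real analytic univariate functions G₀, H₁, H₂, H₃ such that f(x₁,x₂,x₃) = G₀(H₁(x₁) + H₂(x₂) + H₃(x₃)) for all (x₁,x₂,x₃) ∈ W̃. -/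

import Mathlib

/-!
Let `Hᵢ` be an analytic antiderivative of `1 / aᵢ` near `0` and `φᵢ` its analytic local inverse,
so that `φᵢ' = aᵢ ∘ φᵢ`. In the coordinates `uᵢ = Hᵢ xᵢ` the system says that
`g = f ∘ (φ₁ × φ₂ × φ₃)` satisfies `∂₁g = ∂₂g = ∂₃g`, so `g` is constant along the directions
with zero coordinate sum and `g u = g (u₁ + u₂ + u₃, 0, 0)` near `0`. Hence
`f = G₀ ∘ (H₁ + H₂ + H₃)` near the origin, with `G₀ s = f (φ₁ s, φ₂ 0, φ₃ 0)`.
The analytic antiderivative is obtained by integrating a power series termwise.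
-/

open MeasureTheory Set

/-- ∂f/∂x₁ for a function on ℝ³. -/
noncomputable def pd1 (f : ℝ × ℝ × ℝ → ℝ) (p : ℝ × ℝ × ℝ) : ℝ :=
  deriv (fun t => f (t, p.2.1, p.2.2)) p.1

/-- ∂f/∂x₂ for a function on ℝ³. -/
noncomputable def pd2 (f : ℝ × ℝ × ℝ → ℝ) (p : ℝ × ℝ × ℝ) : ℝ :=
  deriv (fun t => f (p.1, t, p.2.2)) p.2.1

/-- ∂f/∂x₃ for a function on ℝ³. -/
noncomputable def pd3 (f : ℝ × ℝ × ℝ → ℝ) (p : ℝ × ℝ × ℝ) : ℝ :=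
  deriv (fun t => f (p.1, p.2.1, t)) p.2.2

/-- 𝒢₁ = f₃ f₁₂ − f₁₃ f₂. -/
noncomputable def G1 (f : ℝ × ℝ × ℝ → ℝ) (p : ℝ × ℝ × ℝ) : ℝ :=
  pd3 f p * pd1 (pd2 f) p - pd1 (pd3 f) p * pd2 f p

/-- 𝒢₂ = f₃ f₁₂ − f₂₃ f₁. -/
noncomputable def G2 (f : ℝ × ℝ × ℝ → ℝ) (p : ℝ × ℝ × ℝ) : ℝ :=
  pd3 f p * pd1 (pd2 f) p - pd2 (pd3 f) p * pd1 f p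

/-- 𝒢₃ = f₁ f₂₃ − f₁₃ f₂. -/
noncomputable def G3 (f : ℝ × ℝ × ℝ → ℝ) (p : ℝ × ℝ × ℝ) : ℝ :=
  pd1 f p * pd2 (pd3 f) p - pd1 (pd3 f) p * pd2 f p

/-- The bad set 𝒵_{3,f}: common zero set of 𝒢₁, 𝒢₂, 𝒢₃. -/
noncomputable def badSet3 (f : ℝ × ℝ × ℝ → ℝ) : Set (ℝ × ℝ × ℝ) :=
  {p | G1 f p = 0 ∧ G2 f p = 0 ∧ G3 f p = 0}

open Filter Topology

namespace FormalMultilinearSeries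

variable {𝕜 F : Type*} [RCLike 𝕜] [NormedAddCommGroup F] [NormedSpace 𝕜 F]

noncomputable def antiderivSeries (p : FormalMultilinearSeries 𝕜 𝕜 F) :
    FormalMultilinearSeries 𝕜 𝕜 F
  | 0 => 0
  | n + 1 => ContinuousMultilinearMap.mkPiRing 𝕜 (Fin (n + 1)) (((n : 𝕜) + 1)⁻¹ • p.coeff n)

variable (p : FormalMultilinearSeries 𝕜 𝕜 F)

@[simp]
lemma antiderivSeries_zero : p.antiderivSeries 0 = 0 := rfl

@[simp]
lemma coeff_antiderivSeries_succ (n : ℕ) :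
    p.antiderivSeries.coeff (n + 1) = ((n : 𝕜) + 1)⁻¹ • p.coeff n := by
  rw [coeff, antiderivSeries, ContinuousMultilinearMap.mkPiRing_apply]
  simp

lemma norm_antiderivSeries_succ_le (n : ℕ) : ‖p.antiderivSeries (n + 1)‖ ≤ ‖p n‖ := by
  rw [norm_apply_eq_norm_coef, norm_apply_eq_norm_coef, coeff_antiderivSeries_succ, norm_smul]
  refine mul_le_of_le_one_left (norm_nonneg _) ?_
  rw [norm_inv, ← Nat.cast_succ, RCLike.norm_natCast]
  exact inv_le_one_of_one_le₀ (by simp)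

lemma radius_le_radius_antiderivSeries : p.radius ≤ p.antiderivSeries.radius := by
  refine ENNReal.le_of_forall_nnreal_lt fun r hr => ?_
  obtain ⟨C, -, hC⟩ := p.norm_mul_pow_le_of_lt_radius hr
  refine p.antiderivSeries.le_radius_of_bound (max 0 (C * r)) fun n => ?_
  cases n with
  | zero => simp
  | succ n =>
    calc ‖p.antiderivSeries (n + 1)‖ * (r : ℝ) ^ (n + 1)
        ≤ ‖p n‖ * r ^ n * r := by
          rw [pow_succ, ← mul_assoc]
          gcongr
          exact p.norm_antiderivSeries_succ_le n
      _ ≤ C * r := by gcongr; exact hC n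
      _ ≤ max 0 (C * r) := le_max_right _ _

lemma derivSeries_antiderivSeries_apply_one (n : ℕ) (m : Fin n → 𝕜) :
    p.antiderivSeries.derivSeries n m 1 = p n m := by
  rw [apply_eq_prod_smul_coeff, apply_eq_prod_smul_coeff, _root_.smul_apply,
    derivSeries_coeff_one, coeff_antiderivSeries_succ, ← Nat.cast_smul_eq_nsmul 𝕜, smul_smul,
    smul_smul, Nat.cast_succ, mul_assoc, mul_inv_cancel₀ (by norm_cast), mul_one]

variable [CompleteSpace F]

lemma hasDerivAt_sum_antiderivSeries {y : 𝕜} (hy : ‖y‖ₑ < p.radius) :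
    HasDerivAt p.antiderivSeries.sum (p.sum y) y := by
  set q := p.antiderivSeries
  have hq : ‖y‖ₑ < q.radius := hy.trans_le p.radius_le_radius_antiderivSeries
  have hq' : y ∈ Metric.eball (0 : 𝕜) q.derivSeries.radius := by
    simpa using hq.trans_le q.radius_le_radius_derivSeries
  have hsum := (q.derivSeries.hasSum hq').mapL (ContinuousLinearMap.apply 𝕜 F (1 : 𝕜))
  simp only [ContinuousLinearMap.apply_apply] at hsum
  have hsum' : HasSum (fun n => p n fun _ => y) (q.derivSeries.sum y 1) := by
    simpa only [q, derivSeries_antiderivSeries_apply_one] using hsum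
  have h := (q.hasFDerivAt_sum hq).hasDerivAt
  rwa [hsum'.unique (p.hasSum (by simpa using hy))] at h

end FormalMultilinearSeries

section
variable {𝕜 F : Type*} [RCLike 𝕜] [NormedAddCommGroup F] [NormedSpace 𝕜 F] [CompleteSpace F]

theorem AnalyticAt.exists_eventually_analyticAt_hasDerivAt {g : 𝕜 → F} {x₀ : 𝕜}
    (hg : AnalyticAt 𝕜 g x₀) :
    ∃ G : 𝕜 → F, G x₀ = 0 ∧ ∀ᶠ x in 𝓝 x₀, AnalyticAt 𝕜 G x ∧ HasDerivAt G (g x) x := by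
  obtain ⟨p, r, hp⟩ := hg
  set q := p.antiderivSeries
  have hrq : r ≤ q.radius := hp.r_le.trans p.radius_le_radius_antiderivSeries
  have hG : HasFPowerSeriesOnBall (fun x => q.sum (x - x₀)) q x₀ q.radius := by
    simpa using (q.hasFPowerSeriesOnBall (hp.r_pos.trans_le hrq)).comp_sub x₀
  refine ⟨fun x => q.sum (x - x₀), by simpa [q] using (hG.coeff_zero Fin.elim0).symm, ?_⟩
  filter_upwards [Metric.eball_mem_nhds x₀ hp.r_pos] with x hx
  have hx' : x - x₀ ∈ Metric.eball 0 r := by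
    simpa [edist_eq_enorm_sub] using hx
  refine ⟨hG.analyticAt_of_mem (Metric.eball_subset_eball hrq hx), ?_⟩
  have hgx : g x = p.sum (x - x₀) := by simpa using hp.sum hx'
  rw [hgx]
  exact (p.hasDerivAt_sum_antiderivSeries
    ((Metric.mem_eball.1 hx').trans_le hp.r_le |>.trans_eq' (by simp))).comp_sub_const x x₀

end

section
variable {𝕜 : Type*} [RCLike 𝕜]

theorem AnalyticAt.exists_flow_of_ne_zero {a : 𝕜 → 𝕜} (ha : AnalyticAt 𝕜 a 0) (ha0 : a 0 ≠ 0) :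
    ∃ H φ : 𝕜 → 𝕜, H 0 = 0 ∧ φ 0 = 0 ∧ (∀ᶠ t in 𝓝 0, AnalyticAt 𝕜 H t ∧ φ (H t) = t) ∧
      ∀ᶠ z in 𝓝 0, AnalyticAt 𝕜 φ z ∧ HasDerivAt φ (a (φ z)) z := by
  obtain ⟨H, hH0, hH⟩ := (ha.inv ha0).exists_eventually_analyticAt_hasDerivAt
  obtain ⟨hHa, hHd⟩ := hH.self_of_nhds
  have hd : deriv H 0 ≠ 0 := by simpa [hHd.deriv] using ha0
  set φ := hHa.hasStrictDerivAt.localInverse H (deriv H 0) 0 hd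
  have hφ0 : φ 0 = 0 := by
    simpa [hH0] using (hHa.hasStrictDerivAt.hasStrictFDerivAt_equiv hd).localInverse_apply_image
  have hφa : AnalyticAt 𝕜 φ 0 := by simpa [hH0] using hHa.analyticAt_localInverse hd
  have hright : ∀ᶠ z in 𝓝 0, H (φ z) = z := by
    simpa [hH0] using hHa.hasStrictDerivAt.eventually_right_inverse hd
  have hφ_near : ∀ᶠ z in 𝓝 0, (AnalyticAt 𝕜 H (φ z) ∧ HasDerivAt H (a (φ z))⁻¹ (φ z)) ∧
      a (φ z) ≠ 0 := by
    have hφ_tendsto := hφa.continuousAt.tendsto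
    rw [hφ0] at hφ_tendsto
    exact hφ_tendsto.eventually (hH.and (ha.continuousAt.eventually_ne ha0))
  refine ⟨H, φ, hH0, hφ0, ?_, ?_⟩
  · filter_upwards [hH, hHa.hasStrictDerivAt.eventually_left_inverse hd] with t ht hinv
    exact ⟨ht.1, hinv⟩
  · filter_upwards [hφa.eventually_analyticAt, eventually_eventually_nhds.2 hright, hφ_near]
      with z hφz hinv ⟨⟨_, hHz⟩, hne⟩
    refine ⟨hφz, ?_⟩
    simpa using hHz.of_local_left_inverse hφz.continuousAt (inv_ne_zero hne) hinv

end

theorem eq_of_fderiv_apply_sub_eq_zero {E F : Type*} [NormedAddCommGroup E] [NormedSpace ℝ E]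
    [NormedAddCommGroup F] [NormedSpace ℝ F] {f : E → F} {x y : E}
    (hf : ∀ z ∈ segment ℝ x y, DifferentiableAt ℝ f z)
    (hf' : ∀ z ∈ segment ℝ x y, fderiv ℝ f z (y - x) = 0) : f x = f y := by
  have hk : ∀ t ∈ Icc (0 : ℝ) 1, HasDerivAt (fun t => f (AffineMap.lineMap x y t)) 0 t := by
    intro t ht
    have hz := lineMap_mem_segment (𝕜 := ℝ) x y ht
    simpa [Function.comp_def, hf' _ hz] using
      (hf _ hz).hasFDerivAt.comp_hasDerivAt t AffineMap.hasDerivAt_lineMap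
  have hconst := constant_of_has_deriv_right_zero
    (fun t ht => (hk t ht).continuousAt.continuousWithinAt)
    (fun t ht => (hk t (Ico_subset_Icc_self ht)).hasDerivWithinAt) 1 (right_mem_Icc.2 zero_le_one)
  simpa using hconst.symm

lemma pd1_eq_fderiv {f : ℝ × ℝ × ℝ → ℝ} {p : ℝ × ℝ × ℝ} (hf : DifferentiableAt ℝ f p) :
    pd1 f p = fderiv ℝ f p (1, 0, 0) :=
  (hf.hasFDerivAt.comp_hasDerivAt p.1
    ((hasDerivAt_id _).prodMk ((hasDerivAt_const _ _).prodMk (hasDerivAt_const _ _)))).deriv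

lemma pd2_eq_fderiv {f : ℝ × ℝ × ℝ → ℝ} {p : ℝ × ℝ × ℝ} (hf : DifferentiableAt ℝ f p) :
    pd2 f p = fderiv ℝ f p (0, 1, 0) :=
  (hf.hasFDerivAt.comp_hasDerivAt p.2.1
    ((hasDerivAt_const _ _).prodMk ((hasDerivAt_id _).prodMk (hasDerivAt_const _ _)))).deriv

lemma pd3_eq_fderiv {f : ℝ × ℝ × ℝ → ℝ} {p : ℝ × ℝ × ℝ} (hf : DifferentiableAt ℝ f p) :
    pd3 f p = fderiv ℝ f p (0, 0, 1) :=
  (hf.hasFDerivAt.comp_hasDerivAt p.2.2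
    ((hasDerivAt_const _ _).prodMk ((hasDerivAt_const _ _).prodMk (hasDerivAt_id _)))).deriv

lemma fderiv_apply_eq_sum_pd {f : ℝ × ℝ × ℝ → ℝ} {p : ℝ × ℝ × ℝ} (hf : DifferentiableAt ℝ f p)
    (v : ℝ × ℝ × ℝ) :
    fderiv ℝ f p v = v.1 * pd1 f p + v.2.1 * pd2 f p + v.2.2 * pd3 f p := by
  have hv : v = v.1 • ((1 : ℝ), (0 : ℝ), (0 : ℝ)) + v.2.1 • ((0 : ℝ), (1 : ℝ), (0 : ℝ))
      + v.2.2 • ((0 : ℝ), (0 : ℝ), (1 : ℝ)) := by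
    simp
  conv_lhs => rw [hv]
  rw [map_add, map_add, map_smul, map_smul, map_smul, pd1_eq_fderiv hf, pd2_eq_fderiv hf,
    pd3_eq_fderiv hf, smul_eq_mul, smul_eq_mul, smul_eq_mul]

lemma exists_hasFDerivAt_comp_prodMap {f : ℝ × ℝ × ℝ → ℝ} {φ₁ φ₂ φ₃ : ℝ → ℝ} {d₁ d₂ d₃ : ℝ}
    {u : ℝ × ℝ × ℝ} (hf : DifferentiableAt ℝ f (φ₁ u.1, φ₂ u.2.1, φ₃ u.2.2))
    (h₁ : HasDerivAt φ₁ d₁ u.1) (h₂ : HasDerivAt φ₂ d₂ u.2.1) (h₃ : HasDerivAt φ₃ d₃ u.2.2) :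
    ∃ L : ℝ × ℝ × ℝ →L[ℝ] ℝ, HasFDerivAt (fun u => f (φ₁ u.1, φ₂ u.2.1, φ₃ u.2.2)) L u ∧
      ∀ v, L v = d₁ * v.1 * pd1 f (φ₁ u.1, φ₂ u.2.1, φ₃ u.2.2)
        + d₂ * v.2.1 * pd2 f (φ₁ u.1, φ₂ u.2.1, φ₃ u.2.2)
        + d₃ * v.2.2 * pd3 f (φ₁ u.1, φ₂ u.2.1, φ₃ u.2.2) := by
  have hΦ := (h₁.hasFDerivAt.comp u hasFDerivAt_fst).prodMk
    ((h₂.hasFDerivAt.comp u (hasFDerivAt_fst.comp u hasFDerivAt_snd)).prodMk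
      (h₃.hasFDerivAt.comp u (hasFDerivAt_snd.comp u hasFDerivAt_snd)))
  refine ⟨_, hf.hasFDerivAt.comp u hΦ, fun v => ?_⟩
  rw [ContinuousLinearMap.comp_apply, fderiv_apply_eq_sum_pd hf]
  simp only [ContinuousLinearMap.prod_apply, ContinuousLinearMap.comp_apply,
    ContinuousLinearMap.coe_fst', ContinuousLinearMap.coe_snd',
    ContinuousLinearMap.toSpanSingleton_apply, smul_eq_mul]
  ring

lemma eventually_nhds_prod₃ {X Y Z : Type*} [TopologicalSpace X] [TopologicalSpace Y]
    [TopologicalSpace Z] {x : X} {y : Y} {z : Z} {P₁ : X → Prop} {P₂ : Y → Prop} {P₃ : Z → Prop}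
    (h₁ : ∀ᶠ a in 𝓝 x, P₁ a) (h₂ : ∀ᶠ b in 𝓝 y, P₂ b) (h₃ : ∀ᶠ c in 𝓝 z, P₃ c) :
    ∀ᶠ u in 𝓝 (x, y, z), P₁ u.1 ∧ P₂ u.2.1 ∧ P₃ u.2.2 := by
  rw [nhds_prod_eq, nhds_prod_eq]
  exact h₁.prod_mk (h₂.prod_mk h₃)

lemma sum_coords_mem_ball {u : ℝ × ℝ × ℝ} {ρ : ℝ} (hu : u ∈ Metric.ball 0 (ρ / 3)) :
    ((u.1 + u.2.1 + u.2.2, 0, 0) : ℝ × ℝ × ℝ) ∈ Metric.ball 0 ρ := by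
  rw [mem_ball_zero_iff] at hu ⊢
  have h₁ := norm_fst_le u
  have h₂ := (norm_fst_le u.2).trans (norm_snd_le u)
  have h₃ := (norm_snd_le u.2).trans (norm_snd_le u)
  have hnorm : ‖((u.1 + u.2.1 + u.2.2, 0, 0) : ℝ × ℝ × ℝ)‖ = ‖u.1 + u.2.1 + u.2.2‖ := by
    simp [Prod.norm_def]
  rw [hnorm]
  calc ‖u.1 + u.2.1 + u.2.2‖ ≤ ‖u.1‖ + ‖u.2.1‖ + ‖u.2.2‖ := norm_add₃_le
    _ < ρ := by linarith

theorem eventually_comp_flow_eq {f : ℝ × ℝ × ℝ → ℝ} {a₁ a₂ a₃ φ₁ φ₂ φ₃ : ℝ → ℝ}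
    (hφ₁ : ∀ᶠ z in 𝓝 0, HasDerivAt φ₁ (a₁ (φ₁ z)) z)
    (hφ₂ : ∀ᶠ z in 𝓝 0, HasDerivAt φ₂ (a₂ (φ₂ z)) z)
    (hφ₃ : ∀ᶠ z in 𝓝 0, HasDerivAt φ₃ (a₃ (φ₃ z)) z)
    (hf : ∀ᶠ p in 𝓝 (φ₁ 0, φ₂ 0, φ₃ 0), DifferentiableAt ℝ f p ∧
      a₁ p.1 * pd1 f p = a₂ p.2.1 * pd2 f p ∧ a₂ p.2.1 * pd2 f p = a₃ p.2.2 * pd3 f p) :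
    ∀ᶠ u in 𝓝 (0 : ℝ × ℝ × ℝ), f (φ₁ u.1, φ₂ u.2.1, φ₃ u.2.2) =
      f (φ₁ (u.1 + u.2.1 + u.2.2), φ₂ 0, φ₃ 0) := by
  have hΦ : ContinuousAt (fun u : ℝ × ℝ × ℝ => (φ₁ u.1, φ₂ u.2.1, φ₃ u.2.2)) 0 :=
    hφ₁.self_of_nhds.continuousAt.prodMap'
      (hφ₂.self_of_nhds.continuousAt.prodMap' hφ₃.self_of_nhds.continuousAt)
  have hnear : ∀ᶠ u in 𝓝 (0 : ℝ × ℝ × ℝ), (HasDerivAt φ₁ (a₁ (φ₁ u.1)) u.1 ∧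
      HasDerivAt φ₂ (a₂ (φ₂ u.2.1)) u.2.1 ∧ HasDerivAt φ₃ (a₃ (φ₃ u.2.2)) u.2.2) ∧
      DifferentiableAt ℝ f (φ₁ u.1, φ₂ u.2.1, φ₃ u.2.2) ∧
      a₁ (φ₁ u.1) * pd1 f (φ₁ u.1, φ₂ u.2.1, φ₃ u.2.2) =
        a₂ (φ₂ u.2.1) * pd2 f (φ₁ u.1, φ₂ u.2.1, φ₃ u.2.2) ∧
      a₂ (φ₂ u.2.1) * pd2 f (φ₁ u.1, φ₂ u.2.1, φ₃ u.2.2) =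
        a₃ (φ₃ u.2.2) * pd3 f (φ₁ u.1, φ₂ u.2.1, φ₃ u.2.2) :=
    (eventually_nhds_prod₃ hφ₁ hφ₂ hφ₃).and (hΦ.eventually hf)
  obtain ⟨ρ, hρ, hρU⟩ := Metric.eventually_nhds_iff_ball.1 hnear
  filter_upwards [Metric.ball_mem_nhds 0 (by positivity : 0 < ρ / 3)] with u hu
  have hu' : u ∈ Metric.ball 0 ρ := Metric.ball_subset_ball (by linarith) hu
  refine eq_of_fderiv_apply_sub_eq_zero (f := fun u : ℝ × ℝ × ℝ => f (φ₁ u.1, φ₂ u.2.1, φ₃ u.2.2))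
    (x := u) (y := (u.1 + u.2.1 + u.2.2, 0, 0)) (fun z hz => ?_) (fun z hz => ?_)
  all_goals
    obtain ⟨⟨h₁, h₂, h₃⟩, hfz, hpde₁, hpde₂⟩ :=
      hρU z ((convex_ball 0 ρ).segment_subset hu' (sum_coords_mem_ball hu) hz)
    obtain ⟨L, hL, hLv⟩ := exists_hasFDerivAt_comp_prodMap hfz h₁ h₂ h₃
  · exact hL.differentiableAt
  · rw [hL.fderiv, hLv]
    simp only [Prod.fst_sub, Prod.snd_sub]
    linear_combination (u.2.1 + u.2.2) * hpde₁ + u.2.2 * hpde₂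

theorem exists_eventually_eq_comp_sum_of_pde {f : ℝ × ℝ × ℝ → ℝ} {a₁ a₂ a₃ : ℝ → ℝ}
    (ha₁ : AnalyticAt ℝ a₁ 0) (ha₂ : AnalyticAt ℝ a₂ 0) (ha₃ : AnalyticAt ℝ a₃ 0)
    (ha₁0 : a₁ 0 ≠ 0) (ha₂0 : a₂ 0 ≠ 0) (ha₃0 : a₃ 0 ≠ 0)
    (hf : ∀ᶠ p in 𝓝 0, AnalyticAt ℝ f p ∧
      a₁ p.1 * pd1 f p = a₂ p.2.1 * pd2 f p ∧ a₂ p.2.1 * pd2 f p = a₃ p.2.2 * pd3 f p) :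
    ∃ G₀ H₁ H₂ H₃ : ℝ → ℝ, ∀ᶠ x in 𝓝 (0 : ℝ × ℝ × ℝ),
      AnalyticAt ℝ H₁ x.1 ∧ AnalyticAt ℝ H₂ x.2.1 ∧ AnalyticAt ℝ H₃ x.2.2 ∧
      AnalyticAt ℝ G₀ (H₁ x.1 + H₂ x.2.1 + H₃ x.2.2) ∧
      f x = G₀ (H₁ x.1 + H₂ x.2.1 + H₃ x.2.2) := by
  obtain ⟨H₁, φ₁, hH₁0, hφ₁0, hH₁, hφ₁⟩ := ha₁.exists_flow_of_ne_zero ha₁0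
  obtain ⟨H₂, φ₂, hH₂0, hφ₂0, hH₂, hφ₂⟩ := ha₂.exists_flow_of_ne_zero ha₂0
  obtain ⟨H₃, φ₃, hH₃0, hφ₃0, hH₃, hφ₃⟩ := ha₃.exists_flow_of_ne_zero ha₃0
  have hf' : ∀ᶠ p in 𝓝 (φ₁ 0, φ₂ 0, φ₃ 0), AnalyticAt ℝ f p ∧
      a₁ p.1 * pd1 f p = a₂ p.2.1 * pd2 f p ∧ a₂ p.2.1 * pd2 f p = a₃ p.2.2 * pd3 f p := by
    rwa [hφ₁0, hφ₂0, hφ₃0]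
  set G₀ : ℝ → ℝ := fun s => f (φ₁ s, φ₂ 0, φ₃ 0)
  have hcomp : ∀ᶠ u in 𝓝 (0 : ℝ × ℝ × ℝ),
      f (φ₁ u.1, φ₂ u.2.1, φ₃ u.2.2) = G₀ (u.1 + u.2.1 + u.2.2) :=
    eventually_comp_flow_eq (hφ₁.mono fun _ h => h.2) (hφ₂.mono fun _ h => h.2)
      (hφ₃.mono fun _ h => h.2) (hf'.mono fun _ h => ⟨h.1.differentiableAt, h.2⟩)
  have hG₀ : ∀ᶠ s in 𝓝 0, AnalyticAt ℝ G₀ s := by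
    have hγ : Tendsto (fun s => (φ₁ s, φ₂ 0, φ₃ 0)) (𝓝 0) (𝓝 (φ₁ 0, φ₂ 0, φ₃ 0)) :=
      hφ₁.self_of_nhds.1.continuousAt.tendsto.prodMk_nhds tendsto_const_nhds
    filter_upwards [hφ₁, hγ.eventually hf'] with s hs hfs
    exact hfs.1.comp (g := f) (f := fun t => (φ₁ t, φ₂ 0, φ₃ 0)) (hs.1.prod analyticAt_const)
  have hsum : Tendsto (fun u : ℝ × ℝ × ℝ => u.1 + u.2.1 + u.2.2) (𝓝 0) (𝓝 0) :=
    (by fun_prop : Continuous fun u : ℝ × ℝ × ℝ => u.1 + u.2.1 + u.2.2).tendsto' 0 0 (by simp)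
  have hH : Tendsto (fun x : ℝ × ℝ × ℝ => (H₁ x.1, H₂ x.2.1, H₃ x.2.2)) (𝓝 0) (𝓝 0) := by
    have hc : ContinuousAt (fun x : ℝ × ℝ × ℝ => (H₁ x.1, H₂ x.2.1, H₃ x.2.2)) 0 :=
      hH₁.self_of_nhds.1.continuousAt.prodMap'
        (hH₂.self_of_nhds.1.continuousAt.prodMap' hH₃.self_of_nhds.1.continuousAt)
    simpa [hH₁0, hH₂0, hH₃0, Prod.mk_zero_zero] using hc.tendsto
  refine ⟨G₀, H₁, H₂, H₃, ?_⟩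
  filter_upwards [eventually_nhds_prod₃ hH₁ hH₂ hH₃,
    hH.eventually (hcomp.and (hsum.eventually hG₀))]
    with x ⟨⟨hx₁, h₁⟩, ⟨hx₂, h₂⟩, ⟨hx₃, h₃⟩⟩ ⟨hfx, hGx⟩
  refine ⟨hx₁, hx₂, hx₃, hGx, ?_⟩
  rw [← hfx, h₁, h₂, h₃]

/-- Solutions of the characteristic system `a₁ ∂₁f = a₂ ∂₂f = a₃ ∂₃f` on a ball
centered at the origin are locally of the form `G₀(H₁(x₁)+H₂(x₂)+H₃(x₃))`. -/
theorem stmt10 (B : Set (ℝ × ℝ × ℝ)) (r : ℝ) (hr : 0 < r) (hB : B = Metric.ball 0 r)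
    (a₁ a₂ a₃ : ℝ → ℝ)
    (ha₁ : AnalyticOnNhd ℝ a₁ ((fun p : ℝ × ℝ × ℝ => p.1) '' B))
    (ha₂ : AnalyticOnNhd ℝ a₂ ((fun p : ℝ × ℝ × ℝ => p.2.1) '' B))
    (ha₃ : AnalyticOnNhd ℝ a₃ ((fun p : ℝ × ℝ × ℝ => p.2.2) '' B))
    (ha₁0 : ∀ x ∈ (fun p : ℝ × ℝ × ℝ => p.1) '' B, a₁ x ≠ 0)
    (ha₂0 : ∀ x ∈ (fun p : ℝ × ℝ × ℝ => p.2.1) '' B, a₂ x ≠ 0)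
    (ha₃0 : ∀ x ∈ (fun p : ℝ × ℝ × ℝ => p.2.2) '' B, a₃ x ≠ 0)
    (f : ℝ × ℝ × ℝ → ℝ) (hf : AnalyticOnNhd ℝ f B)
    (hpde1 : ∀ p ∈ B, a₁ p.1 * pd1 f p - a₂ p.2.1 * pd2 f p = 0)
    (hpde2 : ∀ p ∈ B, a₂ p.2.1 * pd2 f p - a₃ p.2.2 * pd3 f p = 0) :
    ∃ W : Set (ℝ × ℝ × ℝ), IsOpen W ∧ W.Nonempty ∧ W ⊆ B ∧
      ∃ G₀ H₁ H₂ H₃ : ℝ → ℝ,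
        AnalyticOnNhd ℝ H₁ ((fun p : ℝ × ℝ × ℝ => p.1) '' W) ∧
        AnalyticOnNhd ℝ H₂ ((fun p : ℝ × ℝ × ℝ => p.2.1) '' W) ∧
        AnalyticOnNhd ℝ H₃ ((fun p : ℝ × ℝ × ℝ => p.2.2) '' W) ∧
        AnalyticOnNhd ℝ G₀
          ((fun p : ℝ × ℝ × ℝ => H₁ p.1 + H₂ p.2.1 + H₃ p.2.2) '' W) ∧
        ∀ p ∈ W, f p = G₀ (H₁ p.1 + H₂ p.2.1 + H₃ p.2.2) := by
  subst hB
  have h0 : (0 : ℝ × ℝ × ℝ) ∈ Metric.ball 0 r := Metric.mem_ball_self hr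
  have hpde : ∀ᶠ p in 𝓝 (0 : ℝ × ℝ × ℝ), AnalyticAt ℝ f p ∧
      a₁ p.1 * pd1 f p = a₂ p.2.1 * pd2 f p ∧ a₂ p.2.1 * pd2 f p = a₃ p.2.2 * pd3 f p :=
    (Metric.isOpen_ball.eventually_mem h0).mono fun p hp =>
      ⟨hf p hp, by linarith [hpde1 p hp], by linarith [hpde2 p hp]⟩
  obtain ⟨G₀, H₁, H₂, H₃, hloc⟩ := exists_eventually_eq_comp_sum_of_pde
    (ha₁ 0 ⟨0, h0, rfl⟩) (ha₂ 0 ⟨0, h0, rfl⟩) (ha₃ 0 ⟨0, h0, rfl⟩)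
    (ha₁0 0 ⟨0, h0, rfl⟩) (ha₂0 0 ⟨0, h0, rfl⟩) (ha₃0 0 ⟨0, h0, rfl⟩) hpde
  obtain ⟨W, hW, hWo, h0W⟩ :=
    eventually_nhds_iff.1 ((Metric.isOpen_ball.eventually_mem h0).and hloc)
  refine ⟨W, hWo, ⟨0, h0W⟩, fun x hx => (hW x hx).1, G₀, H₁, H₂, H₃, ?_, ?_, ?_, ?_,
    fun x hx => (hW x hx).2.2.2.2.2⟩
  · rintro _ ⟨x, hx, rfl⟩
    exact (hW x hx).2.1
  · rintro _ ⟨x, hx, rfl⟩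
    exact (hW x hx).2.2.1
  · rintro _ ⟨x, hx, rfl⟩
    exact (hW x hx).2.2.2.1
  · rintro _ ⟨x, hx, rfl⟩
    exact (hW x hx).2.2.2.2.1
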